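/- For every integer n ≥ 0 the polynomial identity Q_{n+1}(x;q) = (1/√([n+1]!))·Σ_{m=0}^{⌊n/2⌋} (−1)^m · β_{2m;n} · x^{n−2m} holds. -/
import Mathlib


open Polynomial Filter

/-- The symmetric q-number `[n] = (q^n - q^{-n})/(q - q⁻¹)`. -/
noncomputable def qnum (q : ℝ) (n : ℕ) : ℝ := (q ^ (n : ℤ) - q ^ (-(n : ℤ))) / (q - q⁻¹)

/-- The q-factorial `[n]! = [1][2]⋯[n]`. -/
noncomputable def qfact (q : ℝ) : ℕ → ℝ
  | 0 => 1
  | n + 1 => qfact q n * qnum q (n + 1)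

/-- The even q-double factorial: `evenDF q n = [2n]!! = [2n][2n-2]⋯[2]`. -/
noncomputable def evenDF (q : ℝ) : ℕ → ℝ
  | 0 => 1
  | n + 1 => qnum q (2 * (n + 1)) * evenDF q n

/-- The odd q-double factorial: `oddDF q n = [2n-1]!! = [2n-1][2n-3]⋯[1]`. -/
noncomputable def oddDF (q : ℝ) : ℕ → ℝ
  | 0 => 1
  | n + 1 => qnum q (2 * n + 1) * oddDF q n

/-- `alphaC q m n = α_{2m-1;n}`, with `α_{-1;n} = 1` and
`α_{2m-1;n} = Σ_{k=2m-1}^{n} [k]·α_{2m-3;k-2}`. -/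
noncomputable def alphaC (q : ℝ) : ℕ → ℕ → ℝ
  | 0, _ => 1
  | m + 1, n => ∑ k ∈ Finset.Icc (2 * m + 1) n, qnum q k * alphaC q m (k - 2)

/-- `betaC q m n = β_{2m;n}`, with `β_{0;n} = 1` and
`β_{2m;n} = Σ_{k=2m}^{n} [k]·β_{2m-2;k-2}`. -/
noncomputable def betaC (q : ℝ) : ℕ → ℕ → ℝ
  | 0, _ => 1
  | m + 1, n => ∑ k ∈ Finset.Icc (2 * m + 2) n, qnum q k * betaC q m (k - 2)

lemma qnum_pos (q : ℝ) (hq : 0 < q) (hq1 : q ≠ 1) {n : ℕ} (hn : 1 ≤ n) :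
    0 < qnum q n := by
  unfold qnum
  rw [zpow_neg, zpow_natCast]
  rcases lt_or_gt_of_ne hq1 with h | h
  · apply div_pos_of_neg_of_neg
    · have h1 : q ^ n < 1 := pow_lt_one₀ (le_of_lt hq) h (by omega)
      have h2 : 1 < (q ^ n)⁻¹ := (one_lt_inv₀ (pow_pos hq n)).2 h1
      linarith
    · have : 1 < q⁻¹ := (one_lt_inv₀ hq).2 h
      linarith
  · apply div_pos
    · have h1 : 1 < q ^ n := one_lt_pow₀ h (by omega)
      have h2 : (q ^ n)⁻¹ < 1 := inv_lt_one_of_one_lt₀ h1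
      linarith
    · have : q⁻¹ < 1 := inv_lt_one_of_one_lt₀ h
      linarith

lemma qfact_pos (q : ℝ) (hq : 0 < q) (hq1 : q ≠ 1) (n : ℕ) : 0 < qfact q n := by
  induction n with
  | zero => norm_num [qfact]
  | succ k ih => exact mul_pos ih (qnum_pos q hq hq1 (by omega))

lemma qnum_one (q : ℝ) (hq : 0 < q) (hq1 : q ≠ 1) : qnum q 1 = 1 := by
  unfold qnum
  rw [show ((1:ℕ):ℤ) = 1 by norm_num, zpow_one, zpow_neg, zpow_one]
  apply div_self
  intro h
  have h2 : q = q⁻¹ := by linarith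
  have h3 : q * q = 1 := by
    field_simp at h2
    nlinarith [h2]
  have h4 : (q - 1) * (q + 1) = 0 := by nlinarith
  rcases mul_eq_zero.1 h4 with h' | h'
  · exact hq1 (by linarith)
  · linarith

lemma betaC_zero_of_lt (q : ℝ) {m n : ℕ} (h : n < 2 * (m + 1)) :
    betaC q (m + 1) n = 0 := by
  show (∑ k ∈ Finset.Icc (2 * m + 2) n, qnum q k * betaC q m (k - 2)) = 0
  rw [Finset.Icc_eq_empty (by omega), Finset.sum_empty]

lemma betaC_rec (q : ℝ) (m n : ℕ) (hn : 1 ≤ n) :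
    betaC q (m + 1) (n + 1) = betaC q (m + 1) n + qnum q (n + 1) * betaC q m (n - 1) := by
  show (∑ k ∈ Finset.Icc (2 * m + 2) (n + 1), qnum q k * betaC q m (k - 2))
    = (∑ k ∈ Finset.Icc (2 * m + 2) n, qnum q k * betaC q m (k - 2)) + _
  rcases le_or_gt (2 * m + 2) (n + 1) with h | h
  · rw [Finset.sum_Icc_succ_top h]
    have : n + 1 - 2 = n - 1 := by omega
    rw [this]
  · rw [Finset.Icc_eq_empty (show ¬ 2*m+2 ≤ n+1 by omega),
      Finset.Icc_eq_empty (show ¬ 2*m+2 ≤ n by omega)]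
    simp only [Finset.sum_empty]
    rcases m with _ | m'
    · omega
    · rw [betaC_zero_of_lt q (by omega)]
      ring

noncomputable def Spoly (q : ℝ) (n : ℕ) : Polynomial ℝ :=
  ∑ m ∈ Finset.range (n + 1), C ((-1 : ℝ) ^ m * betaC q m n) * X ^ (n - 2 * m)

lemma Spoly_eq (q : ℝ) (n : ℕ) :
    Spoly q n = ∑ m ∈ Finset.range (n / 2 + 1),
      C ((-1 : ℝ) ^ m * betaC q m n) * X ^ (n - 2 * m) := by
  unfold Spoly
  symm
  apply Finset.sum_subset
  · intro x hx
    simp only [Finset.mem_range] at *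
    omega
  · intro x hx hx'
    simp only [Finset.mem_range] at *
    rcases x with _ | x'
    · omega
    · rw [betaC_zero_of_lt q (by omega)]
      simp

lemma Spoly_rec (q : ℝ) (n : ℕ) (hn : 1 ≤ n) :
    Spoly q (n + 1) = X * Spoly q n - qnum q (n + 1) • Spoly q (n - 1) := by
  unfold Spoly
  rw [Finset.mul_sum, Finset.smul_sum]
  have hrw : ∀ m ∈ Finset.range (n + 1),
      X * (C ((-1:ℝ)^m * betaC q m n) * X ^ (n - 2*m))
      = C ((-1:ℝ)^m * betaC q m n) * X ^ (n + 1 - 2*m) := by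
    intro m hm
    simp only [Finset.mem_range] at hm
    rcases le_or_gt (2*m) n with h | h
    · rw [show n + 1 - 2*m = (n - 2*m) + 1 by omega, pow_succ]
      ring
    · rcases m with _ | m'
      · omega
      · rw [betaC_zero_of_lt q (by omega)]
        simp
  rw [Finset.sum_congr rfl hrw]
  have hext : (∑ m ∈ Finset.range (n + 1), C ((-1:ℝ)^m * betaC q m n) * X ^ (n + 1 - 2*m))
      = ∑ m ∈ Finset.range (n + 2), C ((-1:ℝ)^m * betaC q m n) * X ^ (n + 1 - 2*m) := by
    rw [Finset.sum_range_succ (n := n + 1)]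
    have hz : betaC q (n + 1) n = 0 := by
      rcases n with _ | n'
      · omega
      · exact betaC_zero_of_lt q (by omega)
    rw [hz]
    simp
  rw [hext]
  have hidx : (n - 1) + 1 = n := by omega
  rw [hidx]
  -- extend subtracted sum from range n to range (n+1)
  have hext2 : (∑ m ∈ Finset.range n,
        qnum q (n+1) • (C ((-1:ℝ)^m * betaC q m (n-1)) * X ^ (n - 1 - 2*m)))
      = ∑ m ∈ Finset.range (n+1),
        qnum q (n+1) • (C ((-1:ℝ)^m * betaC q m (n-1)) * X ^ (n - 1 - 2*m)) := by
    rw [Finset.sum_range_succ]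
    have hz : betaC q n (n - 1) = 0 := by
      rcases n with _ | n'
      · omega
      · exact betaC_zero_of_lt q (by omega)
    rw [hz]
    simp
  rw [hext2]
  rw [Finset.sum_range_succ' (fun m => C ((-1:ℝ)^m * betaC q m (n+1)) * X ^ (n + 1 - 2*m)) (n+1),
      Finset.sum_range_succ' (fun m => C ((-1:ℝ)^m * betaC q m n) * X ^ (n + 1 - 2*m)) (n+1)]
  have hterm : ∀ m ∈ Finset.range (n+1),
      C ((-1:ℝ)^(m+1) * betaC q (m+1) (n+1)) * X ^ (n + 1 - 2*(m+1))
      = C ((-1:ℝ)^(m+1) * betaC q (m+1) n) * X ^ (n + 1 - 2*(m+1))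
        - qnum q (n+1) • (C ((-1:ℝ)^m * betaC q m (n-1)) * X ^ (n - 1 - 2*m)) := by
    intro m _
    have he : n - 1 - 2*m = n + 1 - 2*(m+1) := by omega
    rw [he, betaC_rec q m n hn, Polynomial.smul_eq_C_mul]
    simp only [map_mul, map_add, pow_succ, map_neg, map_one]
    ring
  rw [Finset.sum_congr rfl hterm, Finset.sum_sub_distrib]
  simp only [betaC, pow_zero, one_mul]
  ring

/-- For every `n ≥ 0`,
`Q_{n+1}(x;q) = (1/√([n+1]!))·Σ_{m=0}^{⌊n/2⌋} (−1)^m·β_{2m;n}·x^{n-2m}`. -/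
theorem stmt8 (q : ℝ) (hq : 0 < q) (hq1 : q ≠ 1)
    (Qp : ℕ → Polynomial ℝ)
    (hQ0 : Qp 0 = 0) (hQ1 : Qp 1 = 1)
    (hQrec : ∀ n : ℕ, 1 ≤ n →
      Real.sqrt (qnum q n) • Qp (n - 1) + Real.sqrt (qnum q (n + 1)) • Qp (n + 1) = X * Qp n)
    (n : ℕ) :
    Qp (n + 1) = (Real.sqrt (qfact q (n + 1)))⁻¹ •
      ∑ m ∈ Finset.range (n / 2 + 1),
        C ((-1 : ℝ) ^ m * betaC q m n) * X ^ (n - 2 * m) := by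
  rw [← Spoly_eq]
  induction n using Nat.strong_induction_on with
  | _ n ih =>
    match n, ih with
    | 0, _ =>
      rw [hQ1]
      have h1 : qfact q 1 = 1 := by
        show qfact q 0 * qnum q 1 = 1
        rw [qnum_one q hq hq1]; norm_num [qfact]
      rw [h1, Real.sqrt_one, inv_one, one_smul]
      unfold Spoly
      simp [betaC]
    | 1, _ =>
      have hr := hQrec 1 le_rfl
      rw [hQ0, hQ1, smul_zero, zero_add, mul_one] at hr
      have hs : (0:ℝ) < Real.sqrt (qnum q 2) :=
        Real.sqrt_pos.2 (qnum_pos q hq hq1 (by omega))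
      have h2 : Qp 2 = (Real.sqrt (qnum q 2))⁻¹ • (X : Polynomial ℝ) := by
        rw [← hr, smul_smul, inv_mul_cancel₀ (ne_of_gt hs), one_smul]
      have hS : Spoly q 1 = X := by
        unfold Spoly
        rw [Finset.sum_range_succ, Finset.sum_range_succ, Finset.sum_range_zero]
        have hb : betaC q 1 1 = 0 := betaC_zero_of_lt q (by omega)
        rw [hb]
        simp [betaC]
      have hf : qfact q 2 = qnum q 2 := by
        show (qfact q 0 * qnum q 1) * qnum q 2 = qnum q 2
        rw [qnum_one q hq hq1]; norm_num [qfact]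
      rw [h2, hS, hf]
    | (k+2), ih =>
      have ih1 := ih k (by omega)
      have ih2 := ih (k+1) (by omega)
      have hr := hQrec (k+2) (by omega)
      have hidx : k + 2 - 1 = k + 1 := rfl
      rw [hidx] at hr
      -- positivity facts
      have hq2 : (0:ℝ) < qnum q (k+2) := qnum_pos q hq hq1 (by omega)
      have hq3 : (0:ℝ) < qnum q (k+3) := qnum_pos q hq hq1 (by omega)
      have hf1 : (0:ℝ) < qfact q (k+1) := qfact_pos q hq hq1 _
      have hf2 : (0:ℝ) < qfact q (k+2) := qfact_pos q hq hq1 _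
      set s2 := Real.sqrt (qnum q (k+2)) with hs2def
      set s3 := Real.sqrt (qnum q (k+3)) with hs3def
      set d1 := Real.sqrt (qfact q (k+1)) with hd1def
      set d2 := Real.sqrt (qfact q (k+2)) with hd2def
      have hs2 : (0:ℝ) < s2 := Real.sqrt_pos.2 hq2
      have hs3 : (0:ℝ) < s3 := Real.sqrt_pos.2 hq3
      have hd1 : (0:ℝ) < d1 := Real.sqrt_pos.2 hf1
      have hd2 : (0:ℝ) < d2 := Real.sqrt_pos.2 hf2
      have hd2eq : d2 = d1 * s2 := by
        rw [hd2def, show qfact q (k+2) = qfact q (k+1) * qnum q (k+2) from rfl,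
          Real.sqrt_mul (le_of_lt hf1)]
      have hd3eq : Real.sqrt (qfact q (k+3)) = d2 * s3 := by
        rw [hd2def, show qfact q (k+3) = qfact q (k+2) * qnum q (k+3) from rfl,
          Real.sqrt_mul (le_of_lt hf2)]
      -- solve recurrence for Qp (k+3)
      have hQ : Qp (k+3) = s3⁻¹ • (X * Qp (k+2) - s2 • Qp (k+1)) := by
        have : s3 • Qp (k+3) = X * Qp (k+2) - s2 • Qp (k+1) := by
          rw [← hr]; abel
        rw [← this, smul_smul, inv_mul_cancel₀ (ne_of_gt hs3), one_smul]
      rw [hQ, ih1, ih2]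
      have hscal : s2 * d1⁻¹ = qnum q (k+2) * d2⁻¹ := by
        have hsq : s2 * s2 = qnum q (k+2) := Real.mul_self_sqrt (le_of_lt hq2)
        rw [hd2eq]
        field_simp
        nlinarith [hsq]
      calc s3⁻¹ • (X * d2⁻¹ • Spoly q (k+1) - s2 • d1⁻¹ • Spoly q k)
          = s3⁻¹ • (d2⁻¹ • (X * Spoly q (k+1)) - (s2 * d1⁻¹) • Spoly q k) := by
            rw [mul_smul_comm, smul_smul]
        _ = s3⁻¹ • (d2⁻¹ • (X * Spoly q (k+1)) - (qnum q (k+2) * d2⁻¹) • Spoly q k) := by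
            rw [hscal]
        _ = (s3⁻¹ * d2⁻¹) • (X * Spoly q (k+1) - qnum q (k+2) • Spoly q k) := by
            rw [smul_sub, smul_sub, smul_smul, smul_smul, smul_smul]
            ring_nf
        _ = (Real.sqrt (qfact q (k+3)))⁻¹ • Spoly q (k+2) := by
            rw [hd3eq, mul_inv, Spoly_rec q (k+1) (by omega)]
            have : k + 1 - 1 = k := rfl
            rw [this]
            ring_nf
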